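/- Let Kh(q,t) be the explicit Khovanov polynomial of K₂ from the paper, and define D(q,t) = Kh(q,t) − (q + q^{-1}). Then D(q,t) is divisible by (1 + q^4 t) in ℤ[q^{±1}, t^{±1}], and the quotient f_2(q,t) = D(q,t)/(1+q^4 t) has non-negative integer coefficients. In particular Kh admits a 1-decomposition with s = 0 and only f_2 nonzero. -/

import Mathlib

open scoped BigOperators

noncomputable section

/-- Laurent polynomials `ℤ[q^{±1}, t^{±1}]` in two variables `q`, `t`,
modelled as the group algebra of `ℤ × ℤ` over `ℤ`. -/
abbrev L2 : Type := AddMonoidAlgebra ℤ (ℤ × ℤ)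

/-- The monomial `c · q^j · t^r`. -/
noncomputable def mono (j r c : ℤ) : L2 := AddMonoidAlgebra.single (j, r) c

/-- The monomial `q^j t^r`. -/
noncomputable def Q (j r : ℤ) : L2 := AddMonoidAlgebra.single (j, r) 1

/-- A Laurent polynomial lies in `ℕ[q^{±1}, t^{±1}]`: all coefficients are non-negative. -/
def IsNonneg (f : L2) : Prop := ∀ m : ℤ × ℤ, 0 ≤ f.coeff m

/-- A `1`-decomposition of `z`:
`z = q^s (q + q^{-1}) + Σ_{k ≥ 2} f_k (1 + q^{2k} t)` with each `f_k ∈ ℕ[q^{±1}, t^{±1}]`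
and only finitely many `f_k` nonzero. -/
def OneDecomp (z : L2) (s : ℤ) (f : ℕ → L2) : Prop :=
  (Function.support f).Finite ∧ (∀ k, IsNonneg (f k)) ∧ (∀ k, k < 2 → f k = 0) ∧
    z = Q s 0 * (Q 1 0 + Q (-1) 0) + ∑ᶠ k : ℕ, f k * (1 + Q (2 * (k : ℤ)) 1)

/-- A `0`-decomposition of `z`: as a `1`-decomposition but without the `q^s(q+q^{-1})` term. -/
def ZeroDecomp (z : L2) (f : ℕ → L2) : Prop :=
  (Function.support f).Finite ∧ (∀ k, IsNonneg (f k)) ∧ (∀ k, k < 2 → f k = 0) ∧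
    z = ∑ᶠ k : ℕ, f k * (1 + Q (2 * (k : ℤ)) 1)

/-- The Khovanov polynomial of the knot `K₂` (Equation (2) of the paper). -/
noncomputable def KhK2 : L2 :=
    mono (-45) (-32) (1) + mono (-41) (-31) (1) + mono (-39) (-29) (1) +
    mono (-35) (-28) (1) + mono (-37) (-27) (1) + mono (-37) (-26) (1) +
    mono (-33) (-26) (1) + mono (-35) (-25) (1) + mono (-33) (-25) (1) +
    mono (-35) (-24) (1) + mono (-31) (-24) (2) + mono (-33) (-23) (1) +
    mono (-31) (-23) (2) + mono (-27) (-23) (1) + mono (-33) (-22) (1) +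
    mono (-29) (-22) (2) + mono (-27) (-22) (1) + mono (-31) (-21) (1) +
    mono (-29) (-21) (3) + mono (-25) (-21) (1) + mono (-31) (-20) (1) +
    mono (-27) (-20) (3) + mono (-25) (-20) (2) + mono (-27) (-19) (4) +
    mono (-23) (-19) (2) + mono (-27) (-18) (1) + mono (-25) (-18) (2) +
    mono (-23) (-18) (4) + mono (-25) (-17) (4) + mono (-23) (-17) (1) +
    mono (-21) (-17) (3) + mono (-19) (-17) (1) + mono (-25) (-16) (4) +
    mono (-23) (-16) (2) + mono (-21) (-16) (6) + mono (-17) (-16) (1) +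
    mono (-23) (-15) (4) + mono (-21) (-15) (5) + mono (-19) (-15) (3) +
    mono (-17) (-15) (2) + mono (-23) (-14) (1) + mono (-21) (-14) (1) +
    mono (-19) (-14) (8) + mono (-17) (-14) (1) + mono (-15) (-14) (1) +
    mono (-21) (-13) (3) + mono (-19) (-13) (6) + mono (-17) (-13) (3) +
    mono (-15) (-13) (4) + mono (-21) (-12) (1) + mono (-19) (-12) (2) +
    mono (-17) (-12) (9) + mono (-15) (-12) (5) + mono (-13) (-12) (2) +
    mono (-17) (-11) (7) + mono (-15) (-11) (4) + mono (-13) (-11) (7) +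
    mono (-17) (-10) (3) + mono (-15) (-10) (7) + mono (-13) (-10) (7) +
    mono (-11) (-10) (2) + mono (-9) (-10) (1) + mono (-15) (-9) (8) +
    mono (-13) (-9) (6) + mono (-11) (-9) (9) + mono (-9) (-9) (1) +
    mono (-15) (-8) (3) + mono (-13) (-8) (5) + mono (-11) (-8) (13) +
    mono (-9) (-8) (4) + mono (-7) (-8) (2) + mono (-13) (-7) (5) +
    mono (-11) (-7) (8) + mono (-9) (-7) (9) + mono (-7) (-7) (5) +
    mono (-5) (-7) (1) + mono (-11) (-6) (5) + mono (-9) (-6) (13) +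
    mono (-7) (-6) (6) + mono (-5) (-6) (4) + mono (-11) (-5) (1) +
    mono (-9) (-5) (8) + mono (-7) (-5) (11) + mono (-5) (-5) (8) +
    mono (-3) (-5) (1) + mono (-9) (-4) (2) + mono (-7) (-4) (12) +
    mono (-5) (-4) (10) + mono (-3) (-4) (6) + mono (-7) (-3) (7) +
    mono (-5) (-3) (9) + mono (-3) (-3) (12) + mono (-1) (-3) (2) +
    mono (-5) (-2) (9) + mono (-3) (-2) (12) + mono (-1) (-2) (8) +
    mono (1) (-2) (1) + mono (-5) (-1) (3) + mono (-3) (-1) (7) +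
    mono (-1) (-1) (15) + mono (1) (-1) (5) + mono (3) (-1) (1) +
    mono (-3) (0) (3) + mono (-1) (0) (14) + mono (1) (0) (10) +
    mono (3) (0) (6) + mono (-3) (1) (1) + mono (-1) (1) (5) +
    mono (1) (1) (11) + mono (3) (1) (10) + mono (5) (1) (2) +
    mono (-1) (2) (1) + mono (1) (2) (8) + mono (3) (2) (10) +
    mono (5) (2) (8) + mono (1) (3) (2) + mono (3) (3) (7) +
    mono (5) (3) (10) + mono (7) (3) (5) + mono (3) (4) (4) +
    mono (5) (4) (7) + mono (7) (4) (6) + mono (9) (4) (3) +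
    mono (3) (5) (1) + mono (9) (5) (5) + mono (5) (5) (4) +
    mono (7) (5) (8) + mono (5) (6) (2) + mono (7) (6) (5) +
    mono (9) (6) (7) + mono (11) (6) (4) + mono (7) (7) (1) +
    mono (9) (7) (5) + mono (11) (7) (4) + mono (13) (7) (3) +
    mono (9) (8) (2) + mono (11) (8) (4) + mono (13) (8) (3) +
    mono (11) (9) (3) + mono (13) (9) (4) + mono (15) (9) (3) +
    mono (11) (10) (1) + mono (13) (10) (1) + mono (15) (10) (3) +
    mono (17) (10) (2) + mono (13) (11) (1) + mono (15) (11) (2) +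
    mono (17) (11) (1) + mono (13) (12) (1) + mono (17) (12) (2) +
    mono (19) (12) (1) + mono (17) (13) (2) + mono (21) (13) (1) +
    mono (17) (14) (1) + mono (19) (14) (1) + mono (21) (14) (1) +
    mono (19) (15) (1) + mono (21) (15) (1) + mono (23) (15) (1) +
    mono (23) (16) (1) + mono (23) (17) (1) + mono (27) (18) (1)

/-! The quotient is found by long division by `1 + q⁴t` in increasing powers of `t`; checking the
resulting product identity and reading off the signs of the quotient's coefficients is then a finite
computation. -/

theorem mono_eq_smul_Q (j r c : ℤ) : mono j r c = c • Q j r := by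
  simp only [mono, Q, AddMonoidAlgebra.smul_single', mul_one]

theorem mono_mul_Q (j r c a b : ℤ) : mono j r c * Q a b = mono (j + a) (r + b) c := by
  simp only [mono, Q, AddMonoidAlgebra.single_mul_single, Prod.mk_add_mk, mul_one]

theorem Q_zero_zero : Q 0 0 = 1 := rfl

theorem IsNonneg.zero : IsNonneg 0 := fun _ => le_rfl

theorem IsNonneg.add {f g : L2} (hf : IsNonneg f) (hg : IsNonneg g) : IsNonneg (f + g) :=
  fun m => add_nonneg (hf m) (hg m)

theorem isNonneg_mono (j r : ℤ) {c : ℤ} (hc : 0 ≤ c) : IsNonneg (mono j r c) := by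
  intro m
  rw [mono, AddMonoidAlgebra.coeff_single, Finsupp.single_apply]
  split_ifs
  exacts [hc, le_rfl]

theorem oneDecomp_of_eq_single {z f : L2} {s : ℤ} {k : ℕ} (hk : 2 ≤ k) (hf : IsNonneg f)
    (hz : z = Q s 0 * (Q 1 0 + Q (-1) 0) + f * (1 + Q (2 * k) 1)) :
    OneDecomp z s (fun i => if i = k then f else 0) := by
  refine ⟨(Set.finite_singleton k).subset fun i hi => ?_, fun i => ?_,
    fun i hi => if_neg (by omega), ?_⟩
  · by_contra hik
    exact hi (if_neg hik)
  · dsimp only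
    split_ifs
    exacts [hf, IsNonneg.zero]
  · rw [finsum_eq_single _ k fun i hik => by simp only [if_neg hik, zero_mul]]
    simpa only [if_pos] using hz

def KhK2Quotient : L2 :=
  mono (-45) (-32) 1 + mono (-39) (-29) 1 + mono (-37) (-27) 1 + mono (-37) (-26) 1 +
  mono (-35) (-25) 1 + mono (-35) (-24) 1 + mono (-33) (-23) 1 + mono (-33) (-22) 1 +
  mono (-31) (-24) 1 + mono (-31) (-23) 1 + mono (-31) (-21) 1 + mono (-31) (-20) 1 +
  mono (-29) (-22) 1 + mono (-29) (-21) 2 + mono (-27) (-20) 2 + mono (-27) (-19) 3 +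
  mono (-27) (-18) 1 + mono (-25) (-18) 2 + mono (-25) (-17) 4 + mono (-25) (-16) 4 +
  mono (-23) (-18) 1 + mono (-23) (-16) 2 + mono (-23) (-15) 4 + mono (-23) (-14) 1 +
  mono (-21) (-17) 1 + mono (-21) (-16) 2 + mono (-21) (-15) 1 + mono (-21) (-14) 1 +
  mono (-21) (-13) 3 + mono (-21) (-12) 1 + mono (-19) (-15) 1 + mono (-19) (-14) 4 +
  mono (-19) (-13) 5 + mono (-19) (-12) 2 + mono (-17) (-13) 2 + mono (-17) (-12) 6 +
  mono (-17) (-11) 6 + mono (-17) (-10) 3 + mono (-15) (-11) 2 + mono (-15) (-10) 7 +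
  mono (-15) (-9) 8 + mono (-15) (-8) 3 + mono (-13) (-11) 1 + mono (-13) (-10) 1 +
  mono (-13) (-9) 3 + mono (-13) (-8) 5 + mono (-13) (-7) 5 + mono (-11) (-9) 2 +
  mono (-11) (-8) 5 + mono (-11) (-7) 5 + mono (-11) (-6) 5 + mono (-11) (-5) 1 +
  mono (-9) (-8) 1 + mono (-9) (-7) 4 + mono (-9) (-6) 8 + mono (-9) (-5) 8 +
  mono (-9) (-4) 2 + mono (-7) (-6) 1 + mono (-7) (-5) 6 + mono (-7) (-4) 11 +
  mono (-7) (-3) 7 + mono (-5) (-4) 2 + mono (-5) (-3) 7 + mono (-5) (-2) 9 +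
  mono (-5) (-1) 3 + mono (-3) (-3) 1 + mono (-3) (-2) 5 + mono (-3) (-1) 7 +
  mono (-3) 0 3 + mono (-3) 1 1 + mono (-1) (-2) 1 + mono (-1) (-1) 6 +
  mono (-1) 0 10 + mono (-1) 1 5 + mono (-1) 2 1 + mono 1 0 2 +
  mono 1 1 8 + mono 1 2 7 + mono 1 3 2 + mono 3 2 5 +
  mono 3 3 6 + mono 3 4 4 + mono 3 5 1 + mono 5 3 3 +
  mono 5 4 5 + mono 5 5 4 + mono 5 6 2 + mono 7 5 4 +
  mono 7 6 4 + mono 7 7 1 + mono 9 6 3 + mono 9 7 3 +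
  mono 9 8 2 + mono 11 8 3 + mono 11 9 3 + mono 11 10 1 +
  mono 13 9 2 + mono 13 10 1 + mono 13 11 1 + mono 13 12 1 +
  mono 15 11 1 + mono 17 12 1 + mono 17 13 1 + mono 17 14 1 +
  mono 19 14 1 + mono 19 15 1 + mono 23 17 1

theorem KhK2_sub_eq_quotient_mul : KhK2 - (Q 1 0 + Q (-1) 0) = KhK2Quotient * (1 + Q 4 1) := by
  unfold KhK2 KhK2Quotient
  simp only [mul_add, mul_one, add_mul, mono_mul_Q]
  norm_num only
  simp only [mono_eq_smul_Q]
  module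

set_option maxRecDepth 4000 in
theorem isNonneg_KhK2Quotient : IsNonneg KhK2Quotient := by
  unfold KhK2Quotient
  repeat' apply IsNonneg.add
  all_goals exact isNonneg_mono _ _ (by norm_num)

/-- `Kh(K₂) - (q + q^{-1})` is divisible by `1 + q^4 t`, with quotient `f₂` having non-negative
coefficients; hence `Kh(K₂)` admits a `1`-decomposition with `s = 0` and only `f₂` nonzero. -/
theorem KhK2_divisible : ∃ f₂ : L2,
    KhK2 - (Q 1 0 + Q (-1) 0) = f₂ * (1 + Q 4 1) ∧
    IsNonneg f₂ ∧
    OneDecomp KhK2 0 (fun k => if k = 2 then f₂ else 0) := by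
  refine ⟨KhK2Quotient, KhK2_sub_eq_quotient_mul, isNonneg_KhK2Quotient,
    oneDecomp_of_eq_single le_rfl isNonneg_KhK2Quotient ?_⟩
  rw [Q_zero_zero, one_mul, show 2 * ((2 : ℕ) : ℤ) = 4 from rfl, ← KhK2_sub_eq_quotient_mul,
    add_sub_cancel]
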